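/- (Graded Vagner–Preston theorem.) Let S be a Γ-graded inverse semigroup. Then there is a Γ-graded set X and an injective semigroup homomorphism ψ : S → I^gr(X) which is graded, i.e. ψ(S_α) ⊆ I(X)_α for all α ∈ Γ. (Concretely, one may take X = S∖{0} with its induced grading and ψ(s) the partial bijection x ↦ sx from s⁻¹sS∖{0} to ss⁻¹S∖{0}.) -/

import Mathlib

/-!
In an inverse semigroup the idempotents commute, which makes `s ↦ s⁻¹` an anti-automorphism.
Hence left multiplication by `s`, restricted to the nonzero elements fixed by the idempotent
`s⁻¹ * s`, is a partial bijection of `S ∖ {0}` whose inverse is left multiplication by `s⁻¹`,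
and `s` is recovered as the image of `s⁻¹ * s`. Since `deg (s * x) = deg s * deg x`, these partial
bijections are graded for the grading of `S ∖ {0}` induced by that of `S`.
-/

/-- A `Γ`-grading on a semigroup with zero `S`. -/
structure Grading (Γ : Type*) [Group Γ] (S : Type*) [SemigroupWithZero S] where
  deg : S → Γ
  deg_mul : ∀ s t : S, s * t ≠ 0 → deg (s * t) = deg s * deg t

namespace Grading

variable {Γ : Type*} [Group Γ] {S : Type*} [SemigroupWithZero S]

/-- The component `S_α = φ⁻¹(α) ∪ {0}` of a `Γ`-graded semigroup. -/
def comp (g : Grading Γ S) (α : Γ) : Set S := {s | s = 0 ∨ g.deg s = α}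

end Grading

/-- For a `Γ`-graded set `X` (partition map `degX : X → Γ`) the component `I(X)_α` of
the graded symmetric inverse monoid of partial bijections of `X`. -/
def IComp {Γ : Type u} [Group Γ] {X : Type v} (degX : X → Γ) (α : Γ) : Set (X ≃. X) :=
  {f | ∀ x y : X, f x = some y → degX y = α * degX x}

class IsInverseSemigroup (S : Type*) [Semigroup S] : Prop where
  existsUnique_inv : ∀ s : S, ∃! t : S, s * t * s = s ∧ t * s * t = t

namespace IsInverseSemigroup

variable {S : Type*} [Semigroup S] [IsInverseSemigroup S]

noncomputable instance : Inv S := ⟨fun s => (existsUnique_inv s).exists.choose⟩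

theorem mul_inv_mul (s : S) : s * s⁻¹ * s = s := (existsUnique_inv s).exists.choose_spec.1

theorem inv_mul_inv (s : S) : s⁻¹ * s * s⁻¹ = s⁻¹ := (existsUnique_inv s).exists.choose_spec.2

theorem eq_inv_of_mul_mul_eq {s t : S} (h₁ : s * t * s = s) (h₂ : t * s * t = t) : t = s⁻¹ :=
  (existsUnique_inv s).unique ⟨h₁, h₂⟩ ⟨mul_inv_mul s, inv_mul_inv s⟩

theorem inv_inv (s : S) : s⁻¹⁻¹ = s :=
  (eq_inv_of_mul_mul_eq (inv_mul_inv s) (mul_inv_mul s)).symm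

theorem inv_eq_self {e : S} (he : IsIdempotentElem e) : e⁻¹ = e :=
  (eq_inv_of_mul_mul_eq (by rw [he.eq, he.eq]) (by rw [he.eq, he.eq])).symm

theorem isIdempotentElem_inv_mul_self (s : S) : IsIdempotentElem (s⁻¹ * s) := by
  rw [IsIdempotentElem, ← mul_assoc, inv_mul_inv]

theorem isIdempotentElem_mul_inv_self (s : S) : IsIdempotentElem (s * s⁻¹) := by
  rw [IsIdempotentElem, ← mul_assoc, mul_inv_mul]

theorem isIdempotentElem_mul {e f : S} (he : IsIdempotentElem e) (hf : IsIdempotentElem f) :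
    IsIdempotentElem (e * f) := by
  -- `f * (e * f)⁻¹ * e` is another inverse of `e * f`; this forces `(e * f)⁻¹` to be idempotent,
  -- hence equal to its own inverse `e * f`.
  have h₁ := mul_inv_mul (e * f)
  have h₂ := inv_mul_inv (e * f)
  have hx : f * (e * f)⁻¹ * e = (e * f)⁻¹ := by
    refine eq_inv_of_mul_mul_eq ?_ ?_
    · simpa only [mul_assoc, he.mul_self_mul, hf.mul_self_mul] using h₁
    · calc f * (e * f)⁻¹ * e * (e * f) * (f * (e * f)⁻¹ * e)
          = f * ((e * f)⁻¹ * (e * f) * (e * f)⁻¹) * e := by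
            simp only [mul_assoc, he.mul_self_mul, hf.mul_self_mul]
        _ = f * (e * f)⁻¹ * e := by rw [h₂, mul_assoc]
  have hxx : IsIdempotentElem (e * f)⁻¹ :=
    calc (e * f)⁻¹ * (e * f)⁻¹ = f * ((e * f)⁻¹ * (e * f) * (e * f)⁻¹) * e := by
          conv_lhs => rw [← hx]
          simp only [mul_assoc]
      _ = (e * f)⁻¹ := by rw [h₂, hx]
  rwa [← inv_eq_self hxx, inv_inv] at hxx

theorem commute_of_isIdempotentElem {e f : S} (he : IsIdempotentElem e)
    (hf : IsIdempotentElem f) : Commute e f := by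
  -- `e * f` and `f * e` are idempotent and inverse to each other.
  have hef := isIdempotentElem_mul he hf
  have hfe := isIdempotentElem_mul hf he
  calc e * f = (e * f)⁻¹ := (inv_eq_self hef).symm
    _ = f * e := by
      refine (eq_inv_of_mul_mul_eq ?_ ?_).symm
      · simpa only [mul_assoc, he.mul_self_mul, hf.mul_self_mul] using hef.eq
      · simpa only [mul_assoc, he.mul_self_mul, hf.mul_self_mul] using hfe.eq

theorem commute_mul_inv_self_inv_mul_self (s t : S) : Commute (s * s⁻¹) (t⁻¹ * t) :=
  commute_of_isIdempotentElem (isIdempotentElem_mul_inv_self s) (isIdempotentElem_inv_mul_self t)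

theorem mul_inv_rev (s t : S) : (s * t)⁻¹ = t⁻¹ * s⁻¹ := by
  have hc := commute_mul_inv_self_inv_mul_self t s
  refine (eq_inv_of_mul_mul_eq ?_ ?_).symm
  · calc s * t * (t⁻¹ * s⁻¹) * (s * t) = s * ((t * t⁻¹) * (s⁻¹ * s)) * t := by
          simp only [mul_assoc]
      _ = (s * s⁻¹ * s) * (t * t⁻¹ * t) := by rw [hc.eq]; simp only [mul_assoc]
      _ = s * t := by rw [mul_inv_mul, mul_inv_mul]
  · calc t⁻¹ * s⁻¹ * (s * t) * (t⁻¹ * s⁻¹) = t⁻¹ * ((s⁻¹ * s) * (t * t⁻¹)) * s⁻¹ := by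
          simp only [mul_assoc]
      _ = (t⁻¹ * t * t⁻¹) * (s⁻¹ * s * s⁻¹) := by rw [← hc.eq]; simp only [mul_assoc]
      _ = t⁻¹ * s⁻¹ := by rw [inv_mul_inv, inv_mul_inv]

theorem mul_inv_self_mul_eq_and_inv_mul_eq_iff {s x y : S} :
    s * s⁻¹ * y = y ∧ s⁻¹ * y = x ↔ s⁻¹ * s * x = x ∧ s * x = y := by
  constructor
  · rintro ⟨hy, rfl⟩
    rw [← mul_assoc, inv_mul_inv, ← mul_assoc]
    exact ⟨rfl, hy⟩
  · rintro ⟨hx, rfl⟩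
    rw [← mul_assoc, mul_inv_mul, ← mul_assoc]
    exact ⟨rfl, hx⟩

theorem inv_mul_self_mul_mul_eq_iff {s t x : S} :
    (s * t)⁻¹ * (s * t) * x = x ↔ t⁻¹ * t * x = x ∧ s⁻¹ * s * (t * x) = t * x := by
  rw [mul_inv_rev]
  constructor
  · intro h
    have htx : t * x = t * t⁻¹ * (s⁻¹ * s * (t * x)) := by
      conv_lhs => rw [← h]
      simp only [mul_assoc]
    refine ⟨?_, ?_⟩
    · calc t⁻¹ * t * x = t⁻¹ * t * t⁻¹ * s⁻¹ * s * t * x := by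
            conv_lhs => rw [← h]
            simp only [mul_assoc]
        _ = x := by rw [inv_mul_inv]; simpa only [mul_assoc] using h
    · -- `t * x` is fixed by `(t * t⁻¹) * (s⁻¹ * s)`, and these idempotents commute
      rw [htx, (commute_mul_inv_self_inv_mul_self t s).left_comm, ← mul_assoc (s⁻¹ * s),
        (isIdempotentElem_inv_mul_self s).eq]
  · rintro ⟨ht, hs⟩
    calc t⁻¹ * s⁻¹ * (s * t) * x = t⁻¹ * (s⁻¹ * s * (t * x)) := by simp only [mul_assoc]
      _ = x := by rw [hs, ← mul_assoc, ht]

section VagnerPreston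

variable {S : Type*} [SemigroupWithZero S] [IsInverseSemigroup S]

theorem inv_mul_self_ne_zero {s : S} (hs : s ≠ 0) : s⁻¹ * s ≠ 0 := by
  intro h
  apply hs
  rw [← mul_inv_mul s, mul_assoc, h, mul_zero]

open Classical in
noncomputable def vagnerPrestonFun (s : S) (x : {x : S // x ≠ 0}) : Option {x : S // x ≠ 0} :=
  if h : s⁻¹ * s * x = x then
    some ⟨s * x, fun h0 => x.2 (by rw [← h, mul_assoc, h0, mul_zero])⟩
  else none

theorem vagnerPrestonFun_eq_some_iff {s : S} {x y : {x : S // x ≠ 0}} :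
    vagnerPrestonFun s x = some y ↔ s⁻¹ * s * x = x ∧ s * x = y := by
  unfold vagnerPrestonFun
  split_ifs with h <;> simp [h, Subtype.ext_iff]

/-- Left multiplication by `s`, from `s⁻¹ * s * S ∖ {0}` onto `s * s⁻¹ * S ∖ {0}`. -/
noncomputable def vagnerPreston (s : S) : {x : S // x ≠ 0} ≃. {x : S // x ≠ 0} where
  toFun := vagnerPrestonFun s
  invFun := vagnerPrestonFun s⁻¹
  inv x y := by
    rw [vagnerPrestonFun_eq_some_iff, vagnerPrestonFun_eq_some_iff, inv_inv]
    exact mul_inv_self_mul_eq_and_inv_mul_eq_iff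

theorem vagnerPreston_eq_some_iff {s : S} {x y : {x : S // x ≠ 0}} :
    vagnerPreston s x = some y ↔ s⁻¹ * s * x = x ∧ s * x = y :=
  vagnerPrestonFun_eq_some_iff

theorem ne_zero_of_vagnerPreston_eq_some {s : S} {x y : {x : S // x ≠ 0}}
    (h : vagnerPreston s x = some y) : s ≠ 0 := by
  rintro rfl
  rw [vagnerPreston_eq_some_iff, mul_zero, zero_mul] at h
  exact x.2 h.1.symm

theorem vagnerPreston_inv_mul_self {s : S} (hs : s ≠ 0) :
    vagnerPreston s ⟨s⁻¹ * s, inv_mul_self_ne_zero hs⟩ = some ⟨s, hs⟩ :=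
  vagnerPreston_eq_some_iff.2 ⟨isIdempotentElem_inv_mul_self s, by rw [← mul_assoc, mul_inv_mul]⟩

theorem vagnerPreston_mul (s t : S) :
    vagnerPreston (s * t) = (vagnerPreston t).trans (vagnerPreston s) := by
  refine PEquiv.ext fun x => Option.ext fun y => ?_
  rw [PEquiv.trans_eq_some, vagnerPreston_eq_some_iff, inv_mul_self_mul_mul_eq_iff]
  constructor
  · rintro ⟨⟨ht, hs⟩, hy⟩
    have htx : t * x ≠ 0 := fun h0 => x.2 (by rw [← ht, mul_assoc, h0, mul_zero])
    exact ⟨⟨t * x, htx⟩, vagnerPreston_eq_some_iff.2 ⟨ht, rfl⟩,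
      vagnerPreston_eq_some_iff.2 ⟨hs, by rw [← hy, mul_assoc]⟩⟩
  · rintro ⟨z, hz, hy⟩
    obtain ⟨ht, hz⟩ := vagnerPreston_eq_some_iff.1 hz
    obtain ⟨hs, hy⟩ := vagnerPreston_eq_some_iff.1 hy
    exact ⟨⟨ht, hz ▸ hs⟩, by rw [mul_assoc, hz, hy]⟩

theorem eq_of_vagnerPreston_eq {s t : S} (h : vagnerPreston s = vagnerPreston t) (hs : s ≠ 0) :
    s = t := by
  have hts : vagnerPreston t ⟨s⁻¹ * s, inv_mul_self_ne_zero hs⟩ = some ⟨s, hs⟩ :=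
    h ▸ vagnerPreston_inv_mul_self hs
  have ht := ne_zero_of_vagnerPreston_eq_some hts
  have hst : vagnerPreston s ⟨t⁻¹ * t, inv_mul_self_ne_zero ht⟩ = some ⟨t, ht⟩ :=
    h ▸ vagnerPreston_inv_mul_self ht
  obtain ⟨hdom_t, himg⟩ : t⁻¹ * t * (s⁻¹ * s) = s⁻¹ * s ∧ t * (s⁻¹ * s) = s :=
    vagnerPreston_eq_some_iff.1 hts
  obtain ⟨hdom_s, -⟩ : s⁻¹ * s * (t⁻¹ * t) = t⁻¹ * t ∧ s * (t⁻¹ * t) = t :=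
    vagnerPreston_eq_some_iff.1 hst
  have he : s⁻¹ * s = t⁻¹ * t := by
    rw [← hdom_t, (commute_of_isIdempotentElem (isIdempotentElem_inv_mul_self t)
      (isIdempotentElem_inv_mul_self s)).eq, hdom_s]
  rw [← himg, he, ← mul_assoc, mul_inv_mul]

theorem vagnerPreston_injective : Function.Injective (vagnerPreston (S := S)) := by
  intro s t h
  by_cases hs : s = 0
  · by_cases ht : t = 0
    · rw [hs, ht]
    · exact (eq_of_vagnerPreston_eq h.symm ht).symm
  · exact eq_of_vagnerPreston_eq h hs

theorem vagnerPreston_mem_IComp {Γ : Type*} [Group Γ] (g : Grading Γ S) {α : Γ} {s : S}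
    (hs : s ∈ g.comp α) : vagnerPreston s ∈ IComp (fun x : {x : S // x ≠ 0} => g.deg x) α := by
  intro x y hxy
  have hs0 := ne_zero_of_vagnerPreston_eq_some hxy
  obtain ⟨-, hy⟩ := vagnerPreston_eq_some_iff.1 hxy
  have hsx : s * x ≠ 0 := hy ▸ y.2
  change g.deg y = α * g.deg x
  rw [← hy, g.deg_mul s x hsx, hs.resolve_left hs0]

end VagnerPreston

end IsInverseSemigroup

/-- **Graded Vagner–Preston theorem** (Proposition `grvagnerpreston`): every `Γ`-graded
inverse semigroup embeds, via a graded injective semigroup homomorphism, into the graded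
symmetric inverse monoid `I^gr(X)` of some `Γ`-graded set `X`.  Multiplication in
`I(X)` is `(φ, ψ) ↦ ψ.trans φ` (apply `ψ` first), matching `φψ` in the paper;
gradedness means `ψ(S_α) ⊆ I(X)_α` for all `α`. -/
theorem graded_vagner_preston {Γ : Type u} [Group Γ] {S : Type v} [SemigroupWithZero S]
    (g : Grading Γ S)
    (hinv : ∀ s : S, ∃! t : S, s * t * s = s ∧ t * s * t = t) :
    ∃ (X : Type v) (degX : X → Γ) (ψ : S → (X ≃. X)),
      Function.Injective ψ ∧
      (∀ s t : S, ψ (s * t) = (ψ t).trans (ψ s)) ∧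
      (∀ (α : Γ), ∀ s ∈ g.comp α, ψ s ∈ IComp degX α) := by
  have : IsInverseSemigroup S := ⟨hinv⟩
  exact ⟨{x : S // x ≠ 0}, fun x => g.deg x, IsInverseSemigroup.vagnerPreston,
    IsInverseSemigroup.vagnerPreston_injective, IsInverseSemigroup.vagnerPreston_mul,
    fun _ _ hs => IsInverseSemigroup.vagnerPreston_mem_IComp g hs⟩
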